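/- arXiv:2006.01330 — 3 statements merged into one kernel-verified Lean document; each statement's English description precedes it below -/
import Mathlib

section
/- Let {A_i}_{i ∈ Λ} be a nonempty family of commutative rings and let A = ∏_{i ∈ Λ} A_i be the product ring. Then A is a weakly Arf ring if and only if A_i is a weakly Arf ring for every i ∈ Λ. -/
open scoped TensorProduct

/-- `A` is a *weakly Arf ring*: whenever `x, y, z ∈ A` with `x` a non-zerodivisor on `A`
and the fractions `y/x` and `z/x` in the total ring of fractions `Q(A)` are integral
over `A`, then `y * z ∈ x A`. -/
def IsWeaklyArfRing (A : Type*) [CommRing A] : Prop :=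
  ∀ (x y z : A) (hx : x ∈ nonZeroDivisors A),
    IsIntegral A (IsLocalization.mk' (FractionRing A) y
      (⟨x, hx⟩ : nonZeroDivisors A)) →
    IsIntegral A (IsLocalization.mk' (FractionRing A) z
      (⟨x, hx⟩ : nonZeroDivisors A)) →
    y * z ∈ Ideal.span {x}

/-!
Clearing denominators, `y / x` is integral over `A` exactly when `y` satisfies an equation
`y ^ n + ∑_{k < n} a_k y ^ k x ^ (n - k) = 0`, a condition that no longer mentions `Q(A)`.
In a product such an equation of degree `n` is the same as one of degree `n` in every factor,
and divisibility is componentwise, so the factors being weakly Arf gives it for the product.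
Conversely, `A i` sits in the product via `x ↦ (x at i, 1 elsewhere)` for denominators and
`y ↦ (y at i, 0 elsewhere)` for numerators; after raising the degree by one, the zero
components satisfy every equation as well.
-/

open Finset Polynomial

section IntegralEquation

variable {A : Type*} [CommRing A]

/-- `y / x` is a root of the monic polynomial `X ^ n + ∑_{k < n} a_k X ^ k`, with denominators
cleared. The degree is explicit because a product needs a common degree in all factors. -/
def HasIntegralEquation (n : ℕ) (x y : A) : Prop :=
  ∃ a : ℕ → A, y ^ n + ∑ k ∈ range n, a k * y ^ k * x ^ (n - k) = 0

theorem HasIntegralEquation.succ {n : ℕ} {x y : A} (h : HasIntegralEquation n x y) :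
    HasIntegralEquation (n + 1) x y := by
  obtain ⟨a, ha⟩ := h
  refine ⟨fun k => if k = 0 then 0 else a (k - 1), ?_⟩
  calc y ^ (n + 1) + ∑ k ∈ range (n + 1),
        (if k = 0 then 0 else a (k - 1)) * y ^ k * x ^ (n + 1 - k)
      = y * (y ^ n + ∑ k ∈ range n, a k * y ^ k * x ^ (n - k)) := by
        simp only [sum_range_succ', if_pos, Nat.succ_ne_zero, if_false, Nat.add_sub_cancel,
          Nat.add_sub_add_right, zero_mul, add_zero, mul_add, mul_sum, pow_succ']
        exact congrArg _ (sum_congr rfl fun k _ => by ring)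
    _ = 0 := by rw [ha, mul_zero]

theorem hasIntegralEquation_zero_right {n : ℕ} (hn : n ≠ 0) (x : A) :
    HasIntegralEquation n x 0 :=
  ⟨0, by simp [hn]⟩

theorem algebraMap_pow_mul_eq {B : Type*} [CommRing B] [Algebra A B] {x y : A} {t : B}
    (ht : algebraMap A B x * t = algebraMap A B y) (n : ℕ) (a : ℕ → A) :
    algebraMap A B x ^ n * (t ^ n + ∑ k ∈ range n, algebraMap A B (a k) * t ^ k) =
      algebraMap A B (y ^ n + ∑ k ∈ range n, a k * y ^ k * x ^ (n - k)) := by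
  simp only [mul_add, mul_sum, map_add, map_sum, map_mul, map_pow, ← ht, mul_pow]
  congr 1
  refine sum_congr rfl fun k hk => ?_
  rw [← Nat.add_sub_cancel' (mem_range.mp hk).le, pow_add, Nat.add_sub_cancel_left]
  ring

theorem isIntegral_mk'_iff_exists_hasIntegralEquation (K : Type*) [CommRing K] [Algebra A K]
    [IsFractionRing A K] {x : A} (hx : x ∈ nonZeroDivisors A) (y : A) :
    IsIntegral A (IsLocalization.mk' K y (⟨x, hx⟩ : nonZeroDivisors A)) ↔
      ∃ n, HasIntegralEquation n x y := by
  set s : nonZeroDivisors A := ⟨x, hx⟩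
  set t := IsLocalization.mk' K y s
  have ht : algebraMap A K x * t = algebraMap A K y := IsLocalization.mk'_spec' K y s
  have hunit : IsUnit (algebraMap A K x) := IsLocalization.map_units K s
  constructor
  · rintro ⟨p, hp, hpt⟩
    refine ⟨p.natDegree, p.coeff, IsFractionRing.injective A K ?_⟩
    rw [← algebraMap_pow_mul_eq ht, map_zero]
    rw [hp.as_sum] at hpt
    simp only [eval₂_add, eval₂_finsetSum, eval₂_mul, eval₂_C, eval₂_X_pow] at hpt
    rw [hpt, mul_zero]
  · rintro ⟨n, a, ha⟩
    refine ⟨X ^ n + ∑ k ∈ range n, C (a k) * X ^ k, ?_, ?_⟩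
    · exact monic_X_pow_add <| (degree_sum_le _ _).trans_lt <|
        (Finset.sup_lt_iff (WithBot.bot_lt_coe n)).2 fun k hk =>
          (degree_C_mul_X_pow_le _ _).trans_lt (WithBot.coe_lt_coe.2 (mem_range.1 hk))
    · apply (hunit.pow n).mul_left_cancel
      simp only [eval₂_add, eval₂_finsetSum, eval₂_mul, eval₂_C, eval₂_X_pow]
      rw [algebraMap_pow_mul_eq ht, ha, map_zero, mul_zero]

end IntegralEquation

theorem isWeaklyArfRing_iff {A : Type*} [CommRing A] :
    IsWeaklyArfRing A ↔ ∀ x ∈ nonZeroDivisors A, ∀ y z : A,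
      (∃ n, HasIntegralEquation n x y) → (∃ n, HasIntegralEquation n x z) → x ∣ y * z := by
  simp only [IsWeaklyArfRing, isIntegral_mk'_iff_exists_hasIntegralEquation,
    Ideal.mem_span_singleton]
  exact ⟨fun h x hx y z => h x y z hx, fun h x y z hx => h x hx y z⟩

section Pi

variable {ι : Type*} {A : ι → Type*} [∀ i, CommRing (A i)]

theorem Pi.mem_nonZeroDivisors_iff {x : ∀ i, A i} :
    x ∈ nonZeroDivisors (∀ i, A i) ↔ ∀ i, x i ∈ nonZeroDivisors (A i) := by
  simp only [← isRegular_iff_mem_nonZeroDivisors, Pi.isRegular_iff]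

theorem Pi.hasIntegralEquation_iff {n : ℕ} {x y : ∀ i, A i} :
    HasIntegralEquation n x y ↔ ∀ i, HasIntegralEquation n (x i) (y i) := by
  constructor
  · rintro ⟨a, ha⟩ i
    exact ⟨fun k => a k i, by simpa using congrFun ha i⟩
  · intro h
    choose a ha using h
    exact ⟨fun k i => a i k, funext fun i => by simpa using ha i⟩

theorem HasIntegralEquation.update_single [DecidableEq ι] {n : ℕ} {i : ι} {x y : A i}
    (h : HasIntegralEquation n x y) (x' : ∀ i, A i) :
    HasIntegralEquation (n + 1) (Function.update x' i x) (Pi.single i y) := by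
  rw [Pi.hasIntegralEquation_iff]
  intro j
  rcases eq_or_ne j i with rfl | hj
  · simpa using h.succ
  · simpa [hj] using hasIntegralEquation_zero_right n.succ_ne_zero (x' j)

end Pi

theorem weaklyArf_pi_general (ι : Type*) (A : ι → Type*)
    [∀ i, CommRing (A i)] :
    IsWeaklyArfRing (∀ i, A i) ↔ ∀ i, IsWeaklyArfRing (A i) := by
  classical
  simp only [isWeaklyArfRing_iff]
  constructor
  · intro H i x hx y z ⟨n, hy⟩ ⟨m, hz⟩
    have hX : Function.update (1 : ∀ i, A i) i x ∈ nonZeroDivisors (∀ i, A i) := by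
      refine Pi.mem_nonZeroDivisors_iff.2 fun j => ?_
      rcases eq_or_ne j i with rfl | hj
      · simpa using hx
      · simp [hj]
    simpa using map_dvd (Pi.evalRingHom A i) <|
      H _ hX _ _ ⟨n + 1, hy.update_single 1⟩ ⟨m + 1, hz.update_single 1⟩
  · intro H x hx y z ⟨n, hy⟩ ⟨m, hz⟩
    rw [Pi.hasIntegralEquation_iff] at hy hz
    choose c hc using fun i => H i (x i) (Pi.mem_nonZeroDivisors_iff.1 hx i) (y i) (z i)
      ⟨n, hy i⟩ ⟨m, hz i⟩
    exact ⟨c, funext hc⟩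

/-- A product `A = ∏ᵢ Aᵢ` of a nonempty family of commutative rings is weakly Arf iff
every `Aᵢ` is weakly Arf. -/
theorem weaklyArf_pi (ι : Type*) [Nonempty ι] (A : ι → Type*)
    [∀ i, CommRing (A i)] :
    IsWeaklyArfRing (∀ i, A i) ↔ ∀ i, IsWeaklyArfRing (A i) :=
  weaklyArf_pi_general ι A
end

section
/- Let R be a Noetherian ring and let M be a finitely generated torsion-free R-module. Then the idealization A = R ⋉ M is a weakly Arf ring if and only if R is a weakly Arf ring and \overline{(a)}·M = aM for every a ∈ W(R), where \overline{(a)} is the integral closure of the principal ideal aR. -/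
open scoped TensorProduct

/-- `a` belongs to the integral closure of the ideal `I`: it satisfies an equation
`a ^ n + c 1 * a ^ (n - 1) + ⋯ + c n = 0` with `c i ∈ I ^ i`, for some `n ≥ 1`. -/
def MemIdealIntegralClosure {A : Type*} [CommRing A] (I : Ideal A) (a : A) : Prop :=
  ∃ n : ℕ, 0 < n ∧ ∃ c : ℕ → A,
    (∀ i ∈ Finset.Icc 1 n, c i ∈ I ^ i) ∧
    a ^ n + ∑ i ∈ Finset.Icc 1 n, c i * a ^ (n - i) = 0

/-- The integral closure `Ī` of an ideal `I` of `A`, as a subset of `A`. -/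
def idealIntegralClosure {A : Type*} [CommRing A] (I : Ideal A) : Set A :=
  {a | MemIdealIntegralClosure I a}

/-- An ideal `I` is integrally closed if `Ī = I`. -/
def Ideal.IsIntegrallyClosedIdeal {A : Type*} [CommRing A] (I : Ideal A) : Prop :=
  idealIntegralClosure I = (I : Set A)

/-!
For a non-zerodivisor `x`, the fraction `y / x` is integral exactly when `y` lies in the integral
closure of `(x)` (clear the denominator `x ^ n` in an equation of integral dependence), so being
weakly Arf means: `y, z ∈ \overline{(x)}` implies `y z ∈ (x)`.

In `R ⋉ M` with `M` torsion-free, `(a, u)` is a non-zerodivisor iff `a` is one, and every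
`(0, m)` squares to zero, so it lies in every integral closure. Applying the weakly Arf property
of `R ⋉ M` to `x = (a, 0)`, `y = (r, 0)`, `z = (0, m)` with `r ∈ \overline{(a)}` gives
`r m ∈ a M`. Conversely, for `x = (a, u)`, `y = (r, m)`, `z = (s, n)` the weakly Arf property of
`R` gives `r s = a b`, where `b / a = (r / a) (s / a)` is integral as well; the module condition
puts `r n + s m - b u` into `a M`, which is what `y z ∈ x (R ⋉ M)` requires.
-/

open Polynomial

section IntegralDependence

variable {A : Type*} [CommRing A]

def integralDependenceSum (n : ℕ) (c : ℕ → A) (a : A) : A :=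
  a ^ n + ∑ i ∈ Finset.Icc 1 n, c i * a ^ (n - i)

theorem map_integralDependenceSum {B F : Type*} [CommRing B] [FunLike F A B]
    [RingHomClass F A B] (f : F) (n : ℕ) (c : ℕ → A) (a : A) :
    f (integralDependenceSum n c a) = integralDependenceSum n (fun i => f (c i)) (f a) := by
  simp [integralDependenceSum, map_sum]

theorem integralDependenceSum_mul (n : ℕ) (c : ℕ → A) (s a : A) :
    integralDependenceSum n (fun i => s ^ i * c i) (s * a) =
      s ^ n * integralDependenceSum n c a := by
  simp only [integralDependenceSum, mul_add, Finset.mul_sum, mul_pow]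
  congr 1
  refine Finset.sum_congr rfl fun i hi => ?_
  obtain ⟨k, rfl⟩ := Nat.exists_eq_add_of_le (Finset.mem_Icc.mp hi).2
  rw [Nat.add_sub_cancel_left, pow_add]
  ring

theorem isIntegral_iff_exists_integralDependenceSum_eq_zero {B : Type*} [CommRing B]
    [Algebra A B] (α : B) :
    IsIntegral A α ↔
      ∃ n, 0 < n ∧ ∃ d : ℕ → A, integralDependenceSum n (fun i => algebraMap A B (d i)) α = 0 := by
  constructor
  · rintro ⟨p, hp, hpα⟩
    rw [← aeval_def] at hpα
    rcases Nat.eq_zero_or_pos p.natDegree with h0 | hpos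
    · have : Subsingleton B := by
        rw [hp.natDegree_eq_zero.mp h0, map_one] at hpα
        exact subsingleton_of_zero_eq_one hpα.symm
      exact ⟨1, one_pos, 0, Subsingleton.elim _ _⟩
    refine ⟨p.natDegree, hpos, fun i => p.coeff (p.natDegree - i), ?_⟩
    rw [← hpα, aeval_eq_sum_range, Finset.sum_range_succ, hp.coeff_natDegree, one_smul,
      integralDependenceSum, add_comm]
    congr 1
    refine Finset.sum_nbij' (fun i => p.natDegree - i) (fun j => p.natDegree - j) ?_ ?_ ?_ ?_
      fun i _ => by rw [Algebra.smul_def]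
    all_goals intro i hi; simp only [Finset.mem_Icc, Finset.mem_range] at hi ⊢; omega
  · rintro ⟨n, hn, d, hd⟩
    refine ⟨X ^ n + ∑ i ∈ Finset.Icc 1 n, C (d i) * X ^ (n - i), monic_X_pow_add ?_, ?_⟩
    · refine (degree_sum_le _ _).trans_lt ((Finset.sup_lt_iff (WithBot.bot_lt_coe n)).mpr
        fun i hi => (degree_C_mul_X_pow_le _ _).trans_lt ?_)
      have := Finset.mem_Icc.mp hi
      exact WithBot.coe_lt_coe.mpr (Nat.sub_lt (by omega) (by omega))
    · rw [← aeval_def]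
      simpa [map_sum, integralDependenceSum] using hd

end IntegralDependence

section IdealIntegralClosure

variable {A : Type*} [CommRing A]

theorem memIdealIntegralClosure_iff {I : Ideal A} {a : A} :
    MemIdealIntegralClosure I a ↔
      ∃ n, 0 < n ∧ ∃ c : ℕ → A, (∀ i ∈ Finset.Icc 1 n, c i ∈ I ^ i) ∧
        integralDependenceSum n c a = 0 :=
  Iff.rfl

theorem memIdealIntegralClosure_of_mem {I : Ideal A} {a : A} (ha : a ∈ I) :
    MemIdealIntegralClosure I a :=
  ⟨1, one_pos, fun _ => -a, by simpa using ha, by simp⟩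

theorem memIdealIntegralClosure_of_isNilpotent (I : Ideal A) {a : A} (ha : IsNilpotent a) :
    MemIdealIntegralClosure I a := by
  obtain ⟨n, hn⟩ := ha
  exact ⟨n + 1, n.succ_pos, 0, fun i _ => zero_mem _, by simp [pow_succ, hn]⟩

theorem MemIdealIntegralClosure.map {B F : Type*} [CommRing B] [FunLike F A B]
    [RingHomClass F A B] (f : F) {I : Ideal A} {a : A} (h : MemIdealIntegralClosure I a) :
    MemIdealIntegralClosure (I.map f) (f a) := by
  obtain ⟨n, hn, c, hc, hsum⟩ := memIdealIntegralClosure_iff.mp h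
  refine memIdealIntegralClosure_iff.mpr ⟨n, hn, fun i => f (c i), fun i hi => ?_, ?_⟩
  · rw [← Ideal.map_pow]
    exact Ideal.mem_map_of_mem f (hc i hi)
  · rw [← map_integralDependenceSum, hsum, map_zero]

theorem MemIdealIntegralClosure.map_span_singleton {B F : Type*} [CommRing B] [FunLike F A B]
    [RingHomClass F A B] (f : F) {x a : A} (h : MemIdealIntegralClosure (Ideal.span {x}) a) :
    MemIdealIntegralClosure (Ideal.span {f x}) (f a) := by
  simpa [Ideal.map_span] using h.map f

end IdealIntegralClosure

section Fractions

variable {B Q : Type*} [CommRing B] [CommRing Q] [Algebra B Q] [IsFractionRing B Q]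

theorem isIntegral_mk'_iff_memIdealIntegralClosure {x : B} (hx : x ∈ nonZeroDivisors B)
    (y : B) :
    IsIntegral B (IsLocalization.mk' Q y (⟨x, hx⟩ : nonZeroDivisors B)) ↔
      MemIdealIntegralClosure (Ideal.span {x}) y := by
  set α := IsLocalization.mk' Q y (⟨x, hx⟩ : nonZeroDivisors B)
  have hxα : algebraMap B Q x * α = algebraMap B Q y := by
    rw [mul_comm]
    exact IsLocalization.mk'_spec Q y _
  have hclear (n : ℕ) (d : ℕ → B) :
      algebraMap B Q (integralDependenceSum n (fun i => x ^ i * d i) y) =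
        algebraMap B Q x ^ n * integralDependenceSum n (fun i => algebraMap B Q (d i)) α := by
    rw [← integralDependenceSum_mul, hxα, map_integralDependenceSum]
    simp only [map_mul, map_pow]
  rw [isIntegral_iff_exists_integralDependenceSum_eq_zero, memIdealIntegralClosure_iff]
  constructor
  · rintro ⟨n, hn, d, hd⟩
    refine ⟨n, hn, fun i => x ^ i * d i, fun i _ => ?_, IsFractionRing.injective B Q ?_⟩
    · rw [Ideal.span_singleton_pow]
      exact Ideal.mem_span_singleton.mpr (dvd_mul_right _ _)
    · rw [hclear, hd, mul_zero, map_zero]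
  · rintro ⟨n, hn, c, hc, hsum⟩
    choose! d hd using fun i hi =>
      Ideal.mem_span_singleton.mp (Ideal.span_singleton_pow x i ▸ hc i hi)
    have hcd : integralDependenceSum n (fun i => x ^ i * d i) y = integralDependenceSum n c y := by
      simp only [integralDependenceSum]
      congr 1
      exact Finset.sum_congr rfl fun i hi => by rw [hd i hi]
    refine ⟨n, hn, d, ((IsLocalization.map_units Q
      (⟨x, hx⟩ : nonZeroDivisors B)).pow n).mul_right_eq_zero.mp ?_⟩
    rw [← hclear, hcd, hsum, map_zero]

end Fractions

section PrincipalIdeal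

variable {B : Type*} [CommRing B] {x : B}

theorem MemIdealIntegralClosure.of_mul_eq_mul (hx : x ∈ nonZeroDivisors B) {y z b : B}
    (hy : MemIdealIntegralClosure (Ideal.span {x}) y)
    (hz : MemIdealIntegralClosure (Ideal.span {x}) z) (h : y * z = x * b) :
    MemIdealIntegralClosure (Ideal.span {x}) b := by
  let s : nonZeroDivisors B := ⟨x, hx⟩
  rw [← isIntegral_mk'_iff_memIdealIntegralClosure (Q := FractionRing B) hx] at hy hz ⊢
  -- `b / x = (y / x) * (z / x)`
  convert hy.mul hz using 1
  rw [← IsLocalization.mk'_mul, h, mul_comm x b]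
  exact (IsLocalization.mk'_cancel b s s).symm

theorem exists_ideal_coe_eq_idealIntegralClosure (hx : x ∈ nonZeroDivisors B) :
    ∃ I : Ideal B, (I : Set B) = idealIntegralClosure (Ideal.span {x}) := by
  let Q := FractionRing B
  let divByX : B →ₗ[B] Q :=
    LinearMap.mulRight B (IsLocalization.mk' Q 1 (⟨x, hx⟩ : nonZeroDivisors B)) ∘ₗ
      Algebra.linearMap B Q
  refine ⟨(Subalgebra.toSubmodule (integralClosure B Q)).comap divByX, Set.ext fun y => ?_⟩
  change IsIntegral B (algebraMap B Q y * _) ↔ MemIdealIntegralClosure _ y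
  rw [← IsLocalization.mk'_eq_mul_mk'_one, isIntegral_mk'_iff_memIdealIntegralClosure]

theorem isWeaklyArfRing_iff_s16 :
    IsWeaklyArfRing B ↔
      ∀ x ∈ nonZeroDivisors B, ∀ y z : B, MemIdealIntegralClosure (Ideal.span {x}) y →
        MemIdealIntegralClosure (Ideal.span {x}) z → y * z ∈ Ideal.span {x} := by
  simp only [IsWeaklyArfRing, isIntegral_mk'_iff_memIdealIntegralClosure]
  exact ⟨fun h x hx y z => h x y z hx, fun h x y z hx => h x hx y z⟩

end PrincipalIdeal

namespace TrivSqZeroExt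

variable {R M : Type*} [CommRing R] [AddCommGroup M] [Module R M] [Module Rᵐᵒᵖ M]
  [IsCentralScalar R M]

theorem mem_nonZeroDivisors_of_fst
    (htf : ∀ r ∈ nonZeroDivisors R, ∀ m : M, r • m = 0 → m = 0) {x : TrivSqZeroExt R M}
    (hx : x.fst ∈ nonZeroDivisors R) : x ∈ nonZeroDivisors (TrivSqZeroExt R M) := by
  refine mem_nonZeroDivisors_iff_right.mpr fun u hu => ?_
  have hu₁ : u.fst = 0 := mem_nonZeroDivisors_iff_right.mp hx _ (by simpa using congrArg fst hu)
  have hu₂ : x.fst • u.snd = 0 := by simpa [hu₁] using congrArg snd hu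
  ext
  · exact hu₁
  · exact htf _ hx _ hu₂

theorem fst_mem_nonZeroDivisors {x : TrivSqZeroExt R M}
    (hx : x ∈ nonZeroDivisors (TrivSqZeroExt R M)) : x.fst ∈ nonZeroDivisors R := by
  refine mem_nonZeroDivisors_iff_right.mpr fun b hb => ?_
  -- first kill `b • x.snd` using `inr (b • x.snd) * x = 0`, then `b` using `inl b * x = 0`
  have hbx : b • x.snd = 0 := by
    have : (inr (b • x.snd) : TrivSqZeroExt R M) * x = 0 := by
      ext <;> simp [smul_smul, hb]
    simpa using congrArg snd (mem_nonZeroDivisors_iff_right.mp hx _ this)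
  have : (inl b : TrivSqZeroExt R M) * x = 0 := by
    ext <;> simp [hb, hbx]
  simpa using congrArg fst (mem_nonZeroDivisors_iff_right.mp hx _ this)

theorem snd_mem_of_mem_span_singleton_inl {a : R} {u : TrivSqZeroExt R M}
    (hu : u ∈ Ideal.span {inl a}) : u.snd ∈ Ideal.span {a} • (⊤ : Submodule R M) := by
  obtain ⟨v, rfl⟩ := Ideal.mem_span_singleton.mp hu
  rw [Submodule.ideal_span_singleton_smul, Submodule.mem_smul_pointwise_iff_exists]
  exact ⟨v.snd, trivial, by simp⟩

theorem mem_span_singleton_of_fst_eq_mul {x u : TrivSqZeroExt R M} {b : R}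
    (hfst : u.fst = x.fst * b)
    (hsnd : u.snd - b • x.snd ∈ Ideal.span {x.fst} • (⊤ : Submodule R M)) :
    u ∈ Ideal.span {x} := by
  rw [Submodule.ideal_span_singleton_smul, Submodule.mem_smul_pointwise_iff_exists] at hsnd
  obtain ⟨w, -, hw⟩ := hsnd
  refine Ideal.mem_span_singleton.mpr ⟨inl b + inr w, ?_⟩
  ext
  · simp [hfst]
  · simp [hw, add_comm]

end TrivSqZeroExt

open TrivSqZeroExt

section Idealization

variable {R M : Type*} [CommRing R] [AddCommGroup M] [Module R M] [Module Rᵐᵒᵖ M]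
  [IsCentralScalar R M]

theorem IsWeaklyArfRing.of_trivSqZeroExt
    (htf : ∀ r ∈ nonZeroDivisors R, ∀ m : M, r • m = 0 → m = 0)
    (h : IsWeaklyArfRing (TrivSqZeroExt R M)) : IsWeaklyArfRing R := by
  rw [isWeaklyArfRing_iff_s16] at h ⊢
  intro x hx y z hy hz
  have hxA : (inl x : TrivSqZeroExt R M) ∈ nonZeroDivisors _ :=
    mem_nonZeroDivisors_of_fst htf hx
  obtain ⟨w, hw⟩ := Ideal.mem_span_singleton.mp <| h _ hxA _ _
    (hy.map_span_singleton (inlHom R M)) (hz.map_span_singleton (inlHom R M))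
  exact Ideal.mem_span_singleton.mpr ⟨w.fst, by simpa using congrArg fst hw⟩

theorem IsWeaklyArfRing.smul_top_eq_of_trivSqZeroExt
    (htf : ∀ r ∈ nonZeroDivisors R, ∀ m : M, r • m = 0 → m = 0)
    (h : IsWeaklyArfRing (TrivSqZeroExt R M)) {a : R} (ha : a ∈ nonZeroDivisors R)
    {I : Ideal R} (hI : (I : Set R) = idealIntegralClosure (Ideal.span {a})) :
    I • (⊤ : Submodule R M) = Ideal.span {a} • (⊤ : Submodule R M) := by
  refine le_antisymm (Submodule.smul_le.mpr fun y hy m _ => ?_) (Submodule.smul_mono_left ?_)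
  · have haA : (inl a : TrivSqZeroExt R M) ∈ nonZeroDivisors _ :=
      mem_nonZeroDivisors_of_fst htf ha
    have hy' : y ∈ idealIntegralClosure (Ideal.span {a}) := hI ▸ hy
    have hm : MemIdealIntegralClosure (Ideal.span {inl a}) (inr m : TrivSqZeroExt R M) :=
      memIdealIntegralClosure_of_isNilpotent _ ⟨2, by simp [sq]⟩
    simpa using snd_mem_of_mem_span_singleton_inl <|
      isWeaklyArfRing_iff_s16.mp h _ haA _ _ (MemIdealIntegralClosure.map_span_singleton (inlHom R M) hy') hm
  · rw [Ideal.span_le, Set.singleton_subset_iff, hI]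
    exact memIdealIntegralClosure_of_mem (Ideal.mem_span_singleton_self a)

theorem IsWeaklyArfRing.trivSqZeroExt (hR : IsWeaklyArfRing R)
    (hM : ∀ a ∈ nonZeroDivisors R, ∀ I : Ideal R,
      (I : Set R) = idealIntegralClosure (Ideal.span {a}) →
      I • (⊤ : Submodule R M) = Ideal.span {a} • (⊤ : Submodule R M)) :
    IsWeaklyArfRing (TrivSqZeroExt R M) := by
  rw [isWeaklyArfRing_iff_s16] at hR ⊢
  intro x hx y z hy hz
  have hx₁ := fst_mem_nonZeroDivisors hx
  have hy₁ : MemIdealIntegralClosure (Ideal.span {x.fst}) y.fst :=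
    hy.map_span_singleton (fstHom R R M)
  have hz₁ : MemIdealIntegralClosure (Ideal.span {x.fst}) z.fst :=
    hz.map_span_singleton (fstHom R R M)
  obtain ⟨b, hb⟩ := Ideal.mem_span_singleton.mp (hR _ hx₁ _ _ hy₁ hz₁)
  obtain ⟨I, hI⟩ := exists_ideal_coe_eq_idealIntegralClosure hx₁
  have hsmul {t : R} (ht : MemIdealIntegralClosure (Ideal.span {x.fst}) t) (m : M) :
      t • m ∈ Ideal.span {x.fst} • (⊤ : Submodule R M) :=
    hM _ hx₁ I hI ▸ Submodule.smul_mem_smul (show t ∈ (I : Set R) from hI ▸ ht) trivial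
  refine mem_span_singleton_of_fst_eq_mul (b := b) (by simpa using hb) ?_
  have hsnd : (y * z).snd - b • x.snd = y.fst • z.snd + z.fst • y.snd - b • x.snd := by
    simp [snd_mul]
  rw [hsnd]
  exact sub_mem (add_mem (hsmul hy₁ _) (hsmul hz₁ _)) (hsmul (hy₁.of_mul_eq_mul hx₁ hz₁ hb) _)

end Idealization

theorem weaklyArf_idealization_general (R M : Type*) [CommRing R]
    [AddCommGroup M] [Module R M] [Module Rᵐᵒᵖ M] [IsCentralScalar R M]
    (htf : ∀ r ∈ nonZeroDivisors R, ∀ m : M, r • m = 0 → m = 0) :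
    IsWeaklyArfRing (TrivSqZeroExt R M) ↔
      (IsWeaklyArfRing R ∧
        ∀ a ∈ nonZeroDivisors R, ∀ I : Ideal R,
          (I : Set R) = idealIntegralClosure (Ideal.span {a}) →
          I • (⊤ : Submodule R M) = Ideal.span {a} • (⊤ : Submodule R M)) :=
  ⟨fun h => ⟨h.of_trivSqZeroExt htf, fun _ ha _ hI => h.smul_top_eq_of_trivSqZeroExt htf ha hI⟩,
    fun ⟨hR, hM⟩ => hR.trivSqZeroExt hM⟩

/-- For a Noetherian ring `R` and a finitely generated torsion-free `R`-module `M`,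
the idealization `A = R ⋉ M` is weakly Arf iff `R` is weakly Arf and
`\overline{(a)} · M = a M` for every non-zerodivisor `a` of `R`. -/
theorem weaklyArf_idealization (R M : Type*) [CommRing R] [IsNoetherianRing R]
    [AddCommGroup M] [Module R M] [Module Rᵐᵒᵖ M] [IsCentralScalar R M]
    [Module.Finite R M]
    (htf : ∀ r ∈ nonZeroDivisors R, ∀ m : M, r • m = 0 → m = 0) :
    IsWeaklyArfRing (TrivSqZeroExt R M) ↔
      (IsWeaklyArfRing R ∧
        ∀ a ∈ nonZeroDivisors R, ∀ I : Ideal R,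
          (I : Set R) = idealIntegralClosure (Ideal.span {a}) →
          I • (⊤ : Submodule R M) = Ideal.span {a} • (⊤ : Submodule R M)) :=
  weaklyArf_idealization_general R M htf
end

section
/- Let A be a Noetherian ring. Then A is integrally closed in Q(A) (i.e., Ā = A) if and only if every ideal M ∈ Max Λ(A) is principal, i.e., μ_A(M) = 1 for every M ∈ Max Λ(A). -/
open scoped TensorProduct

/-- `Λ(A)`: the set of ideals of `A` of the form `\overline{(x)}` (the integral closure
of the principal ideal `x A`) with `x` a non-zerodivisor on `A`. -/
def LambdaSet (A : Type*) [CommRing A] : Set (Ideal A) :=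
  {J | ∃ x ∈ nonZeroDivisors A, (J : Set A) = idealIntegralClosure (Ideal.span {x})}

/-- `Max Λ(A)`: the maximal elements, with respect to inclusion, of the set of proper
ideals of `A` belonging to `Λ(A)`. -/
def MaxLambdaSet (A : Type*) [CommRing A] : Set (Ideal A) :=
  {J | J ∈ LambdaSet A ∧ J ≠ ⊤ ∧
    ∀ K ∈ LambdaSet A, K ≠ ⊤ → J ≤ K → J = K}

/-! For a non-zerodivisor `x`, multiplying an equation of integral dependence of `a / x` over `A`
by `x ^ n` turns it into one of `a` over `(x)`, and back: `a ∈ \overline{(x)}` iff `a / x` is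
integral over `A`. If `A` is integrally closed, this gives `\overline{(x)} = (x)`, so every member
of `Λ(A)` is principal.

Conversely, assume every `M ∈ Max Λ(A)` is principal and prove `\overline{(x)} ⊆ (x)` by
Noetherian induction on `(x)`. If `x` is not a unit, `\overline{(x)}` lies in some
`M = (y) ∈ Max Λ(A)`. Write `x = y c` and `a = y b` for `a ∈ \overline{(x)}`: then
`b / c = a / x` is integral and `(x) ⊊ (c)` because `y` is not a unit, so `b ∈ (c)` and
`a ∈ (x)`. Every integral `a / x ∈ Q(A)` therefore lies in `A`. -/

open Finset Polynomial
open scoped nonZeroDivisors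

theorem pow_mul_pow_add_sum_Icc {R : Type*} [CommRing R] (s t : R) (d : ℕ → R) (n : ℕ) :
    s ^ n * (t ^ n + ∑ i ∈ Icc 1 n, d i * t ^ (n - i)) =
      (s * t) ^ n + ∑ i ∈ Icc 1 n, s ^ i * d i * (s * t) ^ (n - i) := by
  rw [mul_add, mul_pow, mul_sum]
  congr 1
  refine sum_congr rfl fun i hi => ?_
  rw [← pow_mul_pow_sub s (mem_Icc.1 hi).2]
  ring

theorem Polynomial.Monic.eval₂_eq_pow_add_sum_Icc {R S : Type*} [CommRing R] [CommRing S]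
    {p : R[X]} (hp : p.Monic) (f : R →+* S) (t : S) :
    p.eval₂ f t = t ^ p.natDegree +
      ∑ i ∈ Icc 1 p.natDegree, f (p.coeff (p.natDegree - i)) * t ^ (p.natDegree - i) := by
  rw [eval₂_eq_sum_range, sum_range_succ, hp.coeff_natDegree, map_one, one_mul, add_comm]
  congr 1
  refine sum_nbij' (p.natDegree - ·) (p.natDegree - ·) ?_ ?_ ?_ ?_ ?_ <;> intro i hi <;>
    simp only [mem_range, mem_Icc] at hi ⊢ <;> first | omega | rw [Nat.sub_sub_self hi.le]

theorem isIntegral_of_pow_add_sum_Icc_eq_zero {R S : Type*} [CommRing R] [CommRing S]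
    [Algebra R S] {t : S} {n : ℕ} (d : ℕ → R)
    (h : t ^ n + ∑ i ∈ Icc 1 n, algebraMap R S (d i) * t ^ (n - i) = 0) : IsIntegral R t := by
  refine ⟨X ^ n + ∑ i ∈ Icc 1 n, C (d i) * X ^ (n - i), monic_X_pow_add ?_, by
    simpa [eval₂_finsetSum] using h⟩
  refine (degree_sum_le _ _).trans_lt ((Finset.sup_lt_iff (WithBot.bot_lt_coe n)).2 fun i _ => ?_)
  exact (degree_C_mul_X_pow_le _ _).trans_lt (WithBot.coe_lt_coe.2 (by grind))

theorem eq_top_of_memIdealIntegralClosure_one {A : Type*} [CommRing A] {I : Ideal A}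
    (h : MemIdealIntegralClosure I 1) : I = ⊤ := by
  obtain ⟨n, -, c, hc, heq⟩ := h
  simp only [one_pow, mul_one] at heq
  rw [Ideal.eq_top_iff_one, eq_neg_of_add_eq_zero_left heq]
  exact neg_mem (Ideal.sum_mem _ fun i hi => Ideal.pow_le_self (by grind) (hc i hi))

theorem Ideal.span_singleton_mul_lt_span_singleton {A : Type*} [CommRing A] {y c : A}
    (hc : c ∈ A⁰) (hy : ¬IsUnit y) : Ideal.span {y * c} < Ideal.span {c} := by
  refine lt_of_le_of_ne (Ideal.span_singleton_le_span_singleton.2 (dvd_mul_left c y)) fun h => ?_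
  obtain ⟨d, hd⟩ := Ideal.mem_span_singleton'.1 (h ▸ Ideal.mem_span_singleton_self c)
  have : (y * d - 1) * c = 0 := by linear_combination hd
  exact hy (.of_mul_eq_one d (sub_eq_zero.1 (mem_nonZeroDivisors_iff_right.1 hc _ this)))

theorem exists_mem_maxLambdaSet_le {A : Type*} [CommRing A] [IsNoetherianRing A] {J : Ideal A}
    (hJ : J ∈ LambdaSet A) (hJ_ne_top : J ≠ ⊤) : ∃ M ∈ MaxLambdaSet A, J ≤ M := by
  obtain ⟨M, ⟨hM, hM_ne_top, hJM⟩, hmax⟩ := set_has_maximal_iff_noetherian.2 inferInstance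
    {M | M ∈ LambdaSet A ∧ M ≠ ⊤ ∧ J ≤ M} ⟨J, hJ, hJ_ne_top, le_rfl⟩
  exact ⟨M, ⟨hM, hM_ne_top, fun N hN hN_ne_top hMN =>
    hMN.eq_of_not_lt (hmax N ⟨hN, hN_ne_top, hJM.trans hMN⟩)⟩, hJM⟩

section FractionRing

variable {A : Type*} [CommRing A] (K : Type*) [CommRing K] [Algebra A K] [IsFractionRing A K]

open IsLocalization

theorem memIdealIntegralClosure_span_singleton_iff {x : A⁰} {a : A} :
    MemIdealIntegralClosure (Ideal.span {(x : A)}) a ↔ IsIntegral A (mk' K a x) := by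
  have hxn (n : ℕ) : IsUnit (algebraMap A K x ^ n) := (map_units K x).pow n
  constructor
  · rintro ⟨n, -, c, hc, heq⟩
    have hdvd : ∀ i ∈ Icc 1 n, (x : A) ^ i ∣ c i := fun i hi => by
      simpa only [Ideal.span_singleton_pow, Ideal.mem_span_singleton] using hc i hi
    choose! d hd using hdvd
    refine isIntegral_of_pow_add_sum_Icc_eq_zero (n := n) d ?_
    rw [← (hxn n).mul_right_eq_zero, pow_mul_pow_add_sum_Icc, mk'_spec',
      ← map_zero (algebraMap A K), ← heq, map_add, map_pow, map_sum]
    refine congrArg _ (sum_congr rfl fun i hi => ?_)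
    rw [hd i hi, map_mul, map_mul, map_pow, map_pow]
  · rintro ⟨p, hp, hroot⟩
    rcases Nat.eq_zero_or_pos p.natDegree with h0 | hn
    · rw [hp.natDegree_eq_zero.1 h0, eval₂_one] at hroot
      have : Subsingleton K := subsingleton_of_zero_eq_one hroot.symm
      have : Subsingleton A := (IsFractionRing.injective A K).subsingleton
      exact ⟨1, one_pos, 0, by simp, Subsingleton.elim _ _⟩
    · refine ⟨p.natDegree, hn, fun i => x ^ i * p.coeff (p.natDegree - i), fun i _ => ?_, ?_⟩
      · rw [Ideal.span_singleton_pow]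
        exact Ideal.mul_mem_right _ _ (Ideal.mem_span_singleton_self _)
      · rw [hp.eval₂_eq_pow_add_sum_Icc, ← (hxn _).mul_right_eq_zero, pow_mul_pow_add_sum_Icc,
          mk'_spec'] at hroot
        apply IsFractionRing.injective A K
        simpa using hroot

theorem exists_algebraMap_eq_mk'_iff {x : A⁰} {a : A} :
    (∃ b, algebraMap A K b = mk' K a x) ↔ a ∈ Ideal.span {(x : A)} := by
  simp_rw [Ideal.mem_span_singleton', eq_comm (a := algebraMap A K _), mk'_eq_iff_eq_mul,
    ← map_mul, (IsFractionRing.injective A K).eq_iff, eq_comm]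

variable (A) in
/-- `{a | a / x ∈ Ā}`, which is `\overline{(x)}` by `memIdealIntegralClosure_span_singleton_iff`;
written as a comap so that it is an ideal by construction. -/
noncomputable def integralClosureSpanSingleton (x : A⁰) : Ideal A :=
  (integralClosure A (FractionRing A)).toSubmodule.comap
    (LinearMap.toSpanSingleton A _ (mk' (FractionRing A) 1 x))

theorem mem_integralClosureSpanSingleton {x : A⁰} {a : A} :
    a ∈ integralClosureSpanSingleton A x ↔ IsIntegral A (mk' K a x) := by
  rw [← memIdealIntegralClosure_span_singleton_iff K,
    memIdealIntegralClosure_span_singleton_iff (FractionRing A), ← smul_mk'_one]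
  rfl

theorem integralClosureSpanSingleton_mem_lambdaSet (x : A⁰) :
    integralClosureSpanSingleton A x ∈ LambdaSet A :=
  ⟨x, x.2, Set.ext fun _ => (mem_integralClosureSpanSingleton (FractionRing A)).trans
    (memIdealIntegralClosure_span_singleton_iff _).symm⟩

theorem self_mem_integralClosureSpanSingleton (x : A⁰) :
    (x : A) ∈ integralClosureSpanSingleton A x := by
  rw [mem_integralClosureSpanSingleton (FractionRing A), mk'_self']
  exact isIntegral_one

theorem integralClosureSpanSingleton_ne_top {x : A⁰} (hx : ¬IsUnit (x : A)) :
    integralClosureSpanSingleton A x ≠ ⊤ := fun h => hx <| Ideal.span_singleton_eq_top.1 <|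
  eq_top_of_memIdealIntegralClosure_one <| (memIdealIntegralClosure_span_singleton_iff _).2 <|
    (mem_integralClosureSpanSingleton (FractionRing A)).1 (h ▸ Submodule.mem_top)

theorem exists_eq_span_singleton_of_mem_lambdaSet
    (hA : ∀ t : K, IsIntegral A t → ∃ b : A, algebraMap A K b = t) {M : Ideal A}
    (hM : M ∈ LambdaSet A) : ∃ x : A, M = Ideal.span {x} := by
  obtain ⟨x, hx, hMx⟩ := hM
  lift x to A⁰ using hx
  refine ⟨x, Ideal.ext fun a => ?_⟩
  have hMa : a ∈ M ↔ MemIdealIntegralClosure (Ideal.span {(x : A)}) a := by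
    rw [← SetLike.mem_coe, hMx]
    rfl
  rw [hMa, memIdealIntegralClosure_span_singleton_iff K, ← exists_algebraMap_eq_mk'_iff K]
  exact ⟨hA _, fun ⟨b, hb⟩ => hb ▸ isIntegral_algebraMap⟩

theorem mem_span_singleton_of_isIntegral_mk' [IsNoetherianRing A]
    (H : ∀ M ∈ MaxLambdaSet A, ∃ a : A, M = Ideal.span {a}) (x : A⁰) {a : A}
    (ha : IsIntegral A (mk' K a x)) : a ∈ Ideal.span {(x : A)} := by
  induction x using (InvImage.wf (fun x : A⁰ => Ideal.span {(x : A)}) wellFounded_gt).induction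
    generalizing a with
  | _ x IH =>
    by_cases hx : IsUnit (x : A)
    · simp [Ideal.span_singleton_eq_top.2 hx]
    obtain ⟨M, hM, hxM⟩ := exists_mem_maxLambdaSet_le
      (integralClosureSpanSingleton_mem_lambdaSet x) (integralClosureSpanSingleton_ne_top hx)
    obtain ⟨y, rfl⟩ := H M hM
    have hy : ¬IsUnit y := fun hy => hM.2.1 (Ideal.span_singleton_eq_top.2 hy)
    obtain ⟨c, hxc⟩ :=
      Ideal.mem_span_singleton.1 (hxM (self_mem_integralClosureSpanSingleton x))
    obtain ⟨b, rfl⟩ :=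
      Ideal.mem_span_singleton.1 (hxM ((mem_integralClosureSpanSingleton K).2 ha))
    have hc : c ∈ A⁰ := (mul_mem_nonZeroDivisors.1 (hxc ▸ x.2)).2
    have hb : b ∈ Ideal.span {c} := by
      refine IH ⟨c, hc⟩ ?_ ?_
      · show Ideal.span {(x : A)} < Ideal.span {c}
        rw [hxc]
        exact Ideal.span_singleton_mul_lt_span_singleton hc hy
      convert ha using 1
      rw [mk'_eq_iff_eq, hxc]
      congr 1
      ring
    rw [hxc]
    exact Ideal.mem_span_singleton.2 (mul_dvd_mul_left y (Ideal.mem_span_singleton.1 hb))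

end FractionRing

/-- A Noetherian ring `A` is integrally closed in `Q(A)` iff every `M ∈ Max Λ(A)` is
principal, i.e. `μ_A(M) = 1`. -/
theorem integrallyClosed_iff_maxLambda_principal (A : Type*) [CommRing A]
    [IsNoetherianRing A] :
    (∀ x : FractionRing A, IsIntegral A x →
        ∃ a : A, algebraMap A (FractionRing A) a = x) ↔
      ∀ M ∈ MaxLambdaSet A, ∃ a : A, M = Ideal.span {a} := by
  refine ⟨fun hA M hM => exists_eq_span_singleton_of_mem_lambdaSet _ hA hM.1, fun H t ht => ?_⟩
  obtain ⟨⟨a, x⟩, rfl⟩ := IsLocalization.mk'_surjective A⁰ t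
  exact (exists_algebraMap_eq_mk'_iff _).2 (mem_span_singleton_of_isIntegral_mk' _ H x ht)
end
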